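/- If two density matrices ρ and σ satisfy R(ρ) ≥ R(σ) for every resource monotone R (i.e., for every function from density matrices to nonnegative reals that is nonincreasing under every free operation and vanishes on free states), then ρ is convertible to σ by free operations, i.e., inf_{Λ ∈ O} ‖Λ(ρ) − σ‖₁ = 0. -/

import Mathlib

open scoped Matrix Kronecker ComplexOrder

noncomputable section

/-- A density matrix: positive semidefinite with unit trace. -/
def IsDensityMatrix {ι : Type*} [Fintype ι] (ρ : Matrix ι ι ℂ) : Prop :=
  ρ.PosSemidef ∧ ρ.trace = 1

/-- The trace norm `‖M‖₁ = Tr √(M† M)`. -/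
noncomputable def traceNorm {ι : Type*} [Fintype ι] [DecidableEq ι]
    (M : Matrix ι ι ℂ) : ℝ :=
  (((Matrix.posSemidef_conjTranspose_mul_self M).1.eigenvectorUnitary.1 *
    Matrix.diagonal (((↑) : ℝ → ℂ) ∘ (Real.sqrt ·) ∘ (Matrix.posSemidef_conjTranspose_mul_self M).1.eigenvalues) *
    (star (Matrix.posSemidef_conjTranspose_mul_self M).1.eigenvectorUnitary : Matrix ι ι ℂ)).trace).re

/-- The amplification `Λ ⊗ id_k` of a linear map on matrices. -/
def amplify {ι : Type*} [Fintype ι] [DecidableEq ι]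
    (Λ : Matrix ι ι ℂ →ₗ[ℂ] Matrix ι ι ℂ) (k : ℕ)
    (M : Matrix (ι × Fin k) (ι × Fin k) ℂ) : Matrix (ι × Fin k) (ι × Fin k) ℂ :=
  Matrix.of fun p q => Λ (Matrix.of fun i j => M (i, p.2) (j, q.2)) p.1 q.1

/-- A linear map on matrices is CPTP (a quantum channel) if all its amplifications
preserve positive semidefiniteness and it preserves the trace. -/
def IsCPTP {ι : Type*} [Fintype ι] [DecidableEq ι]
    (Λ : Matrix ι ι ℂ →ₗ[ℂ] Matrix ι ι ℂ) : Prop :=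
  (∀ (k : ℕ) (M : Matrix (ι × Fin k) (ι × Fin k) ℂ),
      M.PosSemidef → (amplify Λ k M).PosSemidef) ∧
  (∀ M, (Λ M).trace = M.trace)

/-- A quantum channel on a `d`-dimensional system. -/
structure QChannel (d : ℕ) where
  toFun : Matrix (Fin d) (Fin d) ℂ →ₗ[ℂ] Matrix (Fin d) (Fin d) ℂ
  cptp : IsCPTP toFun

/-- A resource theory: a convex compact set `F` of free states and a set `O` of free
operations containing the identity, closed under composition, preserving `F`, and
containing the state-preparation channel `ρ ↦ Tr(ρ)σ` for every free `σ`. -/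
structure ResourceTheory (d : ℕ) where
  F : Set (Matrix (Fin d) (Fin d) ℂ)
  O : Set (QChannel d)
  F_density : ∀ σ ∈ F, IsDensityMatrix σ
  F_convex : Convex ℝ F
  F_compact : IsCompact F
  id_mem : ∃ Λ ∈ O, ∀ ρ, Λ.toFun ρ = ρ
  comp_mem : ∀ Λ₁ ∈ O, ∀ Λ₂ ∈ O, ∃ Λ ∈ O, ∀ ρ, Λ.toFun ρ = Λ₂.toFun (Λ₁.toFun ρ)
  free_mapsto : ∀ Λ ∈ O, ∀ σ ∈ F, Λ.toFun σ ∈ F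
  prep_mem : ∀ σ ∈ F, ∃ Λ ∈ O, ∀ ρ : Matrix (Fin d) (Fin d) ℂ, Λ.toFun ρ = ρ.trace • σ

/-- `ρ → σ`: for every `ε > 0` some free operation maps `ρ` within trace-distance `ε` of `σ`. -/
def Converts {d : ℕ} (RT : ResourceTheory d) (ρ σ : Matrix (Fin d) (Fin d) ℂ) : Prop :=
  ∀ ε > 0, ∃ Λ ∈ RT.O, traceNorm (Λ.toFun ρ - σ) < ε

/-- A resource monotone: nonnegative on states, nonincreasing under free operations,
vanishing on free states. -/
def IsMonotone {d : ℕ} (RT : ResourceTheory d) (R : Matrix (Fin d) (Fin d) ℂ → ℝ) : Prop :=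
  (∀ ρ, IsDensityMatrix ρ → 0 ≤ R ρ) ∧
  (∀ ρ, IsDensityMatrix ρ → ∀ Λ ∈ RT.O, R (Λ.toFun ρ) ≤ R ρ) ∧
  (∀ σ ∈ RT.F, R σ = 0)

/-- The pure state `|ψ⟩⟨ψ|`. -/
def pureState {ι : Type*} (ψ : ι → ℂ) : Matrix ι ι ℂ :=
  Matrix.vecMulVec ψ (star ψ)

/-- `ψ` is a unit vector. -/
def IsUnitVec {ι : Type*} [Fintype ι] (ψ : ι → ℂ) : Prop :=
  ∑ i, Complex.normSq (ψ i) = 1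

/-- Trace-norm distance from `ρ` to a set of states. -/
noncomputable def distToSet {ι : Type*} [Fintype ι] [DecidableEq ι]
    (F : Set (Matrix ι ι ℂ)) (ρ : Matrix ι ι ℂ) : ℝ :=
  sInf ((fun μ => traceNorm (ρ - μ)) '' F)


/-! The states in the closure of the free-operation orbit of `ρ` form a set that contains
every free state (prepare it from `ρ`) and is mapped into itself by every free operation
(free operations are continuous and closed under composition). The indicator of its
complement is therefore a resource monotone that vanishes at `ρ`, hence at `σ`, so `σ` lies
in that closure; continuity of the trace norm at `0` makes the infimum of
`‖Λ(ρ) − σ‖₁` vanish. -/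

open Filter Topology

section TraceNorm

variable {ι : Type*} [Fintype ι] [DecidableEq ι]

lemma traceNorm_eq_sum_sqrt_eigenvalues (M : Matrix ι ι ℂ) :
    traceNorm M = ∑ i, √((Matrix.posSemidef_conjTranspose_mul_self M).1.eigenvalues i) := by
  rw [traceNorm, Matrix.trace_mul_comm, ← mul_assoc, Unitary.coe_star_mul_self, one_mul,
    Matrix.trace_diagonal, Complex.re_sum]
  simp

lemma traceNorm_nonneg (M : Matrix ι ι ℂ) : 0 ≤ traceNorm M := by
  rw [traceNorm_eq_sum_sqrt_eigenvalues]
  exact Finset.sum_nonneg fun i _ => Real.sqrt_nonneg _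

lemma traceNorm_le_card_mul_sqrt_trace (M : Matrix ι ι ℂ) :
    traceNorm M ≤ Fintype.card ι * √(Mᴴ * M).trace.re := by
  set hM := Matrix.posSemidef_conjTranspose_mul_self M
  have htrace : (Mᴴ * M).trace.re = ∑ j, hM.1.eigenvalues j := by
    simp [hM.1.trace_eq_sum_eigenvalues]
  calc traceNorm M = ∑ i, √(hM.1.eigenvalues i) := traceNorm_eq_sum_sqrt_eigenvalues M
    _ ≤ ∑ _i : ι, √(∑ j, hM.1.eigenvalues j) :=
        Finset.sum_le_sum fun i _ => Real.sqrt_le_sqrt <|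
          Finset.single_le_sum (fun j _ => hM.eigenvalues_nonneg j) (Finset.mem_univ i)
    _ = Fintype.card ι * √(Mᴴ * M).trace.re := by simp [htrace]

lemma tendsto_traceNorm_zero : Tendsto (traceNorm : Matrix ι ι ℂ → ℝ) (𝓝 0) (𝓝 0) := by
  have hbound : Continuous fun M : Matrix ι ι ℂ => Fintype.card ι * √(Mᴴ * M).trace.re :=
    continuous_const.mul <| Real.continuous_sqrt.comp <| Complex.continuous_re.comp <|
      (continuous_id.matrix_conjTranspose.matrix_mul continuous_id).matrix_trace
  refine tendsto_of_tendsto_of_tendsto_of_le_of_le tendsto_const_nhds ?_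
    traceNorm_nonneg traceNorm_le_card_mul_sqrt_trace
  simpa using hbound.tendsto 0

lemma tendsto_traceNorm_sub_self (σ : Matrix ι ι ℂ) :
    Tendsto (fun τ => traceNorm (τ - σ)) (𝓝 σ) (𝓝 0) :=
  tendsto_traceNorm_zero.comp <| by simpa using (tendsto_id (x := 𝓝 σ)).sub_const σ

lemma sInf_traceNorm_sub_eq_zero_of_mem_closure {S : Set (Matrix ι ι ℂ)} {σ : Matrix ι ι ℂ}
    (hσ : σ ∈ closure S) : sInf ((fun τ => traceNorm (τ - σ)) '' S) = 0 := by
  have hbdd : BddBelow ((fun τ => traceNorm (τ - σ)) '' S) :=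
    ⟨0, Set.forall_mem_image.2 fun τ _ => traceNorm_nonneg _⟩
  refine le_antisymm (le_of_forall_pos_lt_add fun ε hε => ?_)
    (Real.sInf_nonneg <| Set.forall_mem_image.2 fun τ _ => traceNorm_nonneg _)
  obtain ⟨τ, hτε, hτS⟩ := ((tendsto_traceNorm_sub_self σ).eventually
    (gt_mem_nhds hε)).and_frequently (mem_closure_iff_frequently.1 hσ) |>.exists
  calc sInf ((fun τ => traceNorm (τ - σ)) '' S) ≤ traceNorm (τ - σ) :=
        csInf_le hbdd ⟨τ, hτS, rfl⟩
    _ < 0 + ε := by rwa [zero_add]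

end TraceNorm

namespace ResourceTheory

variable {d : ℕ} (RT : ResourceTheory d)

def orbit (ρ : Matrix (Fin d) (Fin d) ℂ) : Set (Matrix (Fin d) (Fin d) ℂ) :=
  (fun Λ : QChannel d => Λ.toFun ρ) '' RT.O

lemma mem_orbit_self (ρ : Matrix (Fin d) (Fin d) ℂ) : ρ ∈ RT.orbit ρ := by
  obtain ⟨Λ, hΛ, hid⟩ := RT.id_mem
  exact ⟨Λ, hΛ, hid ρ⟩

lemma free_subset_orbit {ρ : Matrix (Fin d) (Fin d) ℂ} (hρ : ρ.trace = 1) :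
    RT.F ⊆ RT.orbit ρ := fun σ hσ => by
  obtain ⟨Λ, hΛ, hprep⟩ := RT.prep_mem σ hσ
  exact ⟨Λ, hΛ, show Λ.toFun ρ = σ by rw [hprep, hρ, one_smul]⟩

lemma mapsTo_orbit {Λ : QChannel d} (hΛ : Λ ∈ RT.O) (ρ : Matrix (Fin d) (Fin d) ℂ) :
    Set.MapsTo Λ.toFun (RT.orbit ρ) (RT.orbit ρ) := by
  rintro _ ⟨Λ₁, hΛ₁, rfl⟩
  obtain ⟨Λ₂, hΛ₂, hcomp⟩ := RT.comp_mem Λ₁ hΛ₁ Λ hΛ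
  exact ⟨Λ₂, hΛ₂, hcomp ρ⟩

lemma mapsTo_closure_orbit {Λ : QChannel d} (hΛ : Λ ∈ RT.O) (ρ : Matrix (Fin d) (Fin d) ℂ) :
    Set.MapsTo Λ.toFun (closure (RT.orbit ρ)) (closure (RT.orbit ρ)) :=
  (RT.mapsTo_orbit hΛ ρ).closure Λ.toFun.continuous_of_finiteDimensional

lemma isMonotone_indicator_compl {G : Set (Matrix (Fin d) (Fin d) ℂ)} (hFG : RT.F ⊆ G)
    (hG : ∀ Λ ∈ RT.O, Set.MapsTo Λ.toFun G G) : IsMonotone RT (Gᶜ.indicator 1) := by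
  have hzero {τ} (hτ : τ ∈ G) : Gᶜ.indicator (1 : Matrix (Fin d) (Fin d) ℂ → ℝ) τ = 0 :=
    Set.indicator_of_notMem (Set.notMem_compl_iff.2 hτ) 1
  have hle_one τ : Gᶜ.indicator (1 : Matrix (Fin d) (Fin d) ℂ → ℝ) τ ≤ 1 :=
    Set.indicator_le_self' (fun _ _ => zero_le_one) τ
  refine ⟨fun τ _ => Set.indicator_nonneg (fun _ _ => zero_le_one) τ, fun τ _ Λ hΛ => ?_,
    fun σ hσ => hzero (hFG hσ)⟩
  by_cases hτ : τ ∈ G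
  · rw [hzero hτ, hzero (hG Λ hΛ hτ)]
  · exact (hle_one _).trans_eq (Set.indicator_of_mem hτ 1).symm

end ResourceTheory

theorem monotones_imply_convertibility_general {d : ℕ} (RT : ResourceTheory d)
    (ρ σ : Matrix (Fin d) (Fin d) ℂ) (hρ : IsDensityMatrix ρ)
    (h : ∀ R : Matrix (Fin d) (Fin d) ℂ → ℝ, IsMonotone RT R → R σ ≤ R ρ) :
    sInf ((fun Λ : QChannel d => traceNorm (Λ.toFun ρ - σ)) '' RT.O) = 0 := by
  set G := closure (RT.orbit ρ)
  have hmono : IsMonotone RT (Gᶜ.indicator 1) :=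
    RT.isMonotone_indicator_compl ((RT.free_subset_orbit hρ.2).trans subset_closure)
      fun Λ hΛ => RT.mapsTo_closure_orbit hΛ ρ
  have hσ : σ ∈ G := by
    by_contra hσ
    have := h _ hmono
    rw [Set.indicator_of_mem hσ, Set.indicator_of_notMem
      (Set.notMem_compl_iff.2 (subset_closure (RT.mem_orbit_self ρ)))] at this
    exact one_ne_zero (le_antisymm this zero_le_one)
  rw [← sInf_traceNorm_sub_eq_zero_of_mem_closure hσ, ResourceTheory.orbit, Set.image_image]

/-- If `R(ρ) ≥ R(σ)` for every resource monotone `R`, then `ρ` is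
convertible to `σ` by free operations: `inf_{Λ ∈ O} ‖Λ(ρ) − σ‖₁ = 0`. -/
theorem monotones_imply_convertibility {d : ℕ} (RT : ResourceTheory d)
    (ρ σ : Matrix (Fin d) (Fin d) ℂ) (hρ : IsDensityMatrix ρ) (hσ : IsDensityMatrix σ)
    (h : ∀ R : Matrix (Fin d) (Fin d) ℂ → ℝ, IsMonotone RT R → R σ ≤ R ρ) :
    sInf ((fun Λ : QChannel d => traceNorm (Λ.toFun ρ - σ)) '' RT.O) = 0 :=
  monotones_imply_convertibility_general RT ρ σ hρ h

end
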